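/- Let G = {(ω_1, ω_2) ∈ (0, π) × (0, π) : ω_1 + ω_2 > π} ∪ {(ω_1, ω_2) ∈ (π, 2π) × (π, 2π) : ω_1 + ω_2 < 3π}. For every α ∈ (0, π], the ratio of the two-dimensional Lebesgue measure of G ∩ ((π − α, π + α) × (π − α, π + α)) to the area 4α² of the square (π − α, π + α)² equals 1/2 if α ≤ π/2, and equals (1/4)(−(π/α)² + 4(π/α) − 2) if α > π/2. That is, the probability that a perturbation of the unstable three-bug groups fixed point (ω_1, ω_2) = (π, π), chosen uniformly with each coordinate perturbed by less than α, lands in the cycle region G is p_3^stab(α) = 1/2 for α ≤ π/2 and (1/4)(−(π/α)² + 4(π/α) − 2) for α > π/2. -/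

import Mathlib

/-- The 'gray' cycle region of the three-bug phase portrait in the gap variables
`(ω_1, ω_2)`: all three bugs move in the same direction. -/
def cycleRegion : Set (ℝ × ℝ) :=
  {ω : ℝ × ℝ | ω.1 ∈ Set.Ioo 0 Real.pi ∧ ω.2 ∈ Set.Ioo 0 Real.pi ∧
      Real.pi < ω.1 + ω.2} ∪
  {ω : ℝ × ℝ | ω.1 ∈ Set.Ioo Real.pi (2 * Real.pi) ∧
      ω.2 ∈ Set.Ioo Real.pi (2 * Real.pi) ∧ ω.1 + ω.2 < 3 * Real.pi}

open Classical in
/-- The probability that a perturbation of the unstable three-bug 'groups' fixed point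
`(ω_1, ω_2) = (π, π)`, with each coordinate perturbed by less than `α`, lands in the
cycle region. -/
noncomputable def p3stab (α : ℝ) : ℝ :=
  if α ≤ Real.pi / 2 then 1 / 2
  else (1 / 4) * (-(Real.pi / α) ^ 2 + 4 * (Real.pi / α) - 2)

/-!
The measure-preserving substitutions `(u, v) = (π - ω₁, π - ω₂)` on the lower triangle of `G`
and `(u, v) = (ω₁ - π, ω₂ - π)` on the upper one turn both parts of `G` inside the square into
`{(u, v) ∈ (0, α)² : u + v < π}`. That set is `(0, α)²` minus the corner triangle with legs
`2α - π` which the line `u + v = π` cuts off when `α > π / 2`, so `G` covers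
`2α² - max(0, 2α - π)²` of the area `4α²`.
-/

open MeasureTheory Set Real

def truncatedSquare (a c : ℝ) : Set (ℝ × ℝ) :=
  {q | q.1 ∈ Ioo 0 a ∧ q.2 ∈ Ioo 0 a ∧ q.1 + q.2 < c}

theorem truncatedSquare_eq_regionBetween (a c : ℝ) :
    truncatedSquare a c = regionBetween (fun _ => 0) (fun u => min a (c - u)) (Ioo 0 a) := by
  ext ⟨u, v⟩
  simp only [truncatedSquare, regionBetween, mem_ofPred_eq, mem_Ioo, lt_min_iff]
  constructor
  · rintro ⟨hu, ⟨hv0, hva⟩, huv⟩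
    exact ⟨hu, hv0, hva, by linarith⟩
  · rintro ⟨hu, hv0, hva, huv⟩
    exact ⟨hu, ⟨hv0, hva⟩, by linarith⟩

theorem measurableSet_truncatedSquare (a c : ℝ) : MeasurableSet (truncatedSquare a c) := by
  rw [truncatedSquare_eq_regionBetween]
  exact measurableSet_regionBetween measurable_const (by fun_prop) measurableSet_Ioo

theorem intervalIntegral_min_sub {a c : ℝ} (ha : 0 ≤ a) (hac : a ≤ c) :
    ∫ u in (0)..a, min a (c - u) = a ^ 2 - max 0 (2 * a - c) ^ 2 / 2 := by
  rcases le_or_gt (2 * a) c with hc | hc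
  · have hconst : ∫ u in (0)..a, min a (c - u) = ∫ _ in (0)..a, a :=
      intervalIntegral.integral_congr fun u hu => by
        rw [uIcc_of_le ha] at hu
        exact min_eq_left (by linarith [hu.2])
    rw [hconst, max_eq_left (by linarith)]
    simp
    ring
  · have hint : ∀ x y : ℝ, IntervalIntegrable (fun u => min a (c - u)) volume x y :=
      fun _ _ => (by fun_prop : Continuous fun u : ℝ => min a (c - u)).intervalIntegrable _ _
    have hconst : ∫ u in (0)..(c - a), min a (c - u) = ∫ _ in (0)..(c - a), a :=
      intervalIntegral.integral_congr fun u hu => by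
        rw [uIcc_of_le (by linarith)] at hu
        exact min_eq_left (by linarith [hu.2])
    have hlin : ∫ u in (c - a)..a, min a (c - u) = ∫ u in (c - a)..a, (c - u) :=
      intervalIntegral.integral_congr fun u hu => by
        rw [uIcc_of_le (by linarith)] at hu
        exact min_eq_right (by linarith [hu.1])
    rw [← intervalIntegral.integral_add_adjacent_intervals (hint _ _) (hint _ _), hconst, hlin,
      intervalIntegral.integral_sub intervalIntegrable_const
        intervalIntegral.intervalIntegrable_id, max_eq_right (by linarith)]
    simp
    ring

theorem volume_truncatedSquare {a c : ℝ} (ha : 0 ≤ a) (hac : a ≤ c) :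
    volume (truncatedSquare a c) = ENNReal.ofReal (a ^ 2 - max 0 (2 * a - c) ^ 2 / 2) := by
  have hmin : Continuous fun u : ℝ => min a (c - u) := by fun_prop
  rw [truncatedSquare_eq_regionBetween, Measure.volume_eq_prod,
    volume_regionBetween_eq_integral integrableOn_zero
      (hmin.integrableOn_Icc.mono_set Ioo_subset_Icc_self) measurableSet_Ioo
      fun u hu => le_min ha (by linarith [hu.2]),
    ← integral_Ioc_eq_integral_Ioo, ← intervalIntegral.integral_of_le ha]
  simp only [Pi.sub_apply, sub_zero]
  rw [intervalIntegral_min_sub ha hac]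

theorem volume_preimage_sub_left_prod (d : ℝ) {S : Set (ℝ × ℝ)} (hS : MeasurableSet S) :
    volume ((fun p : ℝ × ℝ => (d - p.1, d - p.2)) ⁻¹' S) = volume S :=
  ((Measure.measurePreserving_sub_left volume d).prod
    (Measure.measurePreserving_sub_left volume d)).measure_preimage hS.nullMeasurableSet

theorem volume_preimage_sub_right_prod (d : ℝ) {S : Set (ℝ × ℝ)} (hS : MeasurableSet S) :
    volume ((fun p : ℝ × ℝ => (p.1 - d, p.2 - d)) ⁻¹' S) = volume S :=
  ((measurePreserving_sub_right volume d).prod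
    (measurePreserving_sub_right volume d)).measure_preimage hS.nullMeasurableSet

theorem cycleRegion_inter_square {α : ℝ} (hα : α ≤ π) :
    cycleRegion ∩ (Ioo (π - α) (π + α) ×ˢ Ioo (π - α) (π + α)) =
      (fun p : ℝ × ℝ => (π - p.1, π - p.2)) ⁻¹' truncatedSquare α π ∪
      (fun p : ℝ × ℝ => (p.1 - π, p.2 - π)) ⁻¹' truncatedSquare α π := by
  ext ⟨x, y⟩
  simp only [cycleRegion, truncatedSquare, mem_inter_iff, mem_union, mem_preimage, mem_prod,
    mem_ofPred_eq, mem_Ioo]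
  constructor
  · rintro ⟨⟨⟨-, hxπ⟩, ⟨-, hyπ⟩, hxy⟩ | ⟨⟨hxπ, -⟩, ⟨hyπ, -⟩, hxy⟩, ⟨hxl, hxu⟩, hyl, hyu⟩
    · exact Or.inl ⟨⟨by linarith, by linarith⟩, ⟨by linarith, by linarith⟩, by linarith⟩
    · exact Or.inr ⟨⟨by linarith, by linarith⟩, ⟨by linarith, by linarith⟩, by linarith⟩
  · rintro (⟨⟨hx0, hxα⟩, ⟨hy0, hyα⟩, hxy⟩ | ⟨⟨hx0, hxα⟩, ⟨hy0, hyα⟩, hxy⟩)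
    · exact ⟨Or.inl ⟨⟨by linarith, by linarith⟩, ⟨by linarith, by linarith⟩, by linarith⟩,
        ⟨by linarith, by linarith⟩, by linarith, by linarith⟩
    · exact ⟨Or.inr ⟨⟨by linarith, by linarith⟩, ⟨by linarith, by linarith⟩, by linarith⟩,
        ⟨by linarith, by linarith⟩, by linarith, by linarith⟩

theorem disjoint_preimage_truncatedSquare (a c d : ℝ) :
    Disjoint ((fun p : ℝ × ℝ => (d - p.1, d - p.2)) ⁻¹' truncatedSquare a c)
      ((fun p : ℝ × ℝ => (p.1 - d, p.2 - d)) ⁻¹' truncatedSquare a c) :=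
  disjoint_left.mpr fun _ h₁ h₂ => by linarith [h₁.1.1, h₂.1.1]

theorem four_mul_sq_mul_p3stab (α : ℝ) :
    4 * α ^ 2 * p3stab α = 2 * α ^ 2 - max 0 (2 * α - π) ^ 2 := by
  unfold p3stab
  split_ifs with h
  · rw [max_eq_left (by linarith)]
    ring
  · have : α ≠ 0 := by linarith [pi_pos]
    rw [max_eq_right (by linarith)]
    field_simp
    ring

theorem four_mul_sq_mul_p3stab_nonneg {α : ℝ} (hα : α ∈ Icc 0 π) : 0 ≤ 4 * α ^ 2 * p3stab α := by
  have hmax : max 0 (2 * α - π) ≤ α := max_le hα.1 (by linarith [hα.2])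
  rw [four_mul_sq_mul_p3stab]
  nlinarith [le_max_left 0 (2 * α - π)]

/-- For every `α ∈ (0, π]`, the ratio of the Lebesgue measure of the intersection of the
cycle region `G` with the square `(π - α, π + α)²` to the area `4α²` of that square equals
`1/2` if `α ≤ π/2` and `(1/4)(-(π/α)² + 4(π/α) - 2)` if `α > π/2`. -/
theorem groups_perturbation_cycle_probability (α : ℝ) (hα : α ∈ Set.Ioc 0 Real.pi) :
    MeasureTheory.volume (cycleRegion ∩
        (Set.Ioo (Real.pi - α) (Real.pi + α) ×ˢ Set.Ioo (Real.pi - α) (Real.pi + α))) =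
      ENNReal.ofReal (4 * α ^ 2 * p3stab α) ∧
    (MeasureTheory.volume (cycleRegion ∩
        (Set.Ioo (Real.pi - α) (Real.pi + α) ×ˢ
          Set.Ioo (Real.pi - α) (Real.pi + α)))).toReal / (4 * α ^ 2) = p3stab α := by
  obtain ⟨hα0, hαπ⟩ := hα
  have hT := measurableSet_truncatedSquare α π
  have hvol : volume (cycleRegion ∩ (Ioo (π - α) (π + α) ×ˢ Ioo (π - α) (π + α))) =
      ENNReal.ofReal (4 * α ^ 2 * p3stab α) := by
    rw [cycleRegion_inter_square hαπ,
      measure_union (disjoint_preimage_truncatedSquare α π π)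
        (measurableSet_preimage (by fun_prop) hT),
      volume_preimage_sub_left_prod π hT, volume_preimage_sub_right_prod π hT,
      volume_truncatedSquare hα0.le hαπ, ← two_mul, four_mul_sq_mul_p3stab,
      ← ENNReal.ofReal_ofNat, ← ENNReal.ofReal_mul zero_le_two]
    ring_nf
  refine ⟨hvol, ?_⟩
  rw [hvol, ENNReal.toReal_ofReal (four_mul_sq_mul_p3stab_nonneg ⟨hα0.le, hαπ⟩),
    mul_div_cancel_left₀ _ (by positivity)]
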